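/- arXiv:2102.08786 — 5 statements merged into one kernel-verified Lean document; each statement's English description precedes it below -/
import Mathlib

section
/- Let G be a simple graph and let w_0, w_1, …, w_ℓ be a non-backtracking walk in G. If 0 ≤ i < j ≤ ℓ and (j − i : ℕ∞) < girth(G), then w_i ≠ w_j. -/
/-!
If `W_i = W_j`, pick such a repetition with `j - i` minimal. Minimality makes the vertices
`W_{i+1}, …, W_j` pairwise distinct, and `j - i ≥ 3` because consecutive vertices are adjacent
and `W` does not backtrack. So the segment `W_i, …, W_j` is a cycle of length `j - i`, which
the girth bound forbids.
-/

namespace SimpleGraph.Walk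

variable {V : Type*} {G : SimpleGraph V}

def IsNonBacktracking {u v : V} (W : G.Walk u v) : Prop :=
  ∀ i : ℕ, 1 ≤ i → i + 1 ≤ W.length → W.getVert (i + 1) ≠ W.getVert (i - 1)

lemma isCycle_of_injOn_getVert {u : V} {c : G.Walk u u} (hc : 3 ≤ c.length)
    (hinj : Set.InjOn c.getVert (Set.Icc 1 c.length)) : c.IsCycle := by
  have hnil : ¬ c.Nil := by rw [← length_eq_zero_iff]; omega
  have hlen := c.length_tail_add_one hnil
  refine isCycle_iff_isPath_tail_and_le_length.mpr ⟨?_, hc⟩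
  refine (IsPath.getVert_injOn_iff _).mp fun k hk m hm hkm => ?_
  simp only [Set.mem_ofPred_eq, getVert_tail] at hk hm hkm
  have := hinj ⟨by omega, by omega⟩ ⟨by omega, by omega⟩ hkm
  omega

lemma getVert_take_drop {u v : V} (W : G.Walk u v) (i n k : ℕ) :
    ((W.drop i).take n).getVert k = W.getVert (i + n ⊓ k) := by
  rw [take_getVert, drop_getVert]

lemma length_take_drop {u v : V} (W : G.Walk u v) {i n : ℕ} (h : i + n ≤ W.length) :
    ((W.drop i).take n).length = n := by
  rw [take_length, drop_length]; omega

lemma IsNonBacktracking.getVert_ne_getVert_add_two {u v : V} {W : G.Walk u v}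
    (hW : W.IsNonBacktracking) {i : ℕ} (hi : i + 2 ≤ W.length) :
    W.getVert i ≠ W.getVert (i + 2) :=
  (hW (i + 1) (by omega) hi).symm

lemma exists_isCycle_of_injOn_getVert {u v : V} (W : G.Walk u v) {i d : ℕ} (hd : 3 ≤ d)
    (hid : i + d ≤ W.length) (h : W.getVert i = W.getVert (i + d))
    (hinj : Set.InjOn (fun k => W.getVert (i + k)) (Set.Icc 1 d)) :
    ∃ c : G.Walk (W.getVert i) (W.getVert i), c.IsCycle ∧ c.length = d := by
  let c := ((W.drop i).take d).copy rfl ((W.drop_getVert i d).trans h.symm)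
  have hlen : c.length = d := by simp [c, length_take_drop W hid]
  refine ⟨c, isCycle_of_injOn_getVert (hlen ▸ hd) fun k hk m hm hkm => ?_, hlen⟩
  rw [hlen] at hk hm
  simp only [c, getVert_copy, getVert_take_drop, min_eq_right hk.2, min_eq_right hm.2] at hkm
  exact hinj hk hm hkm

lemma IsNonBacktracking.exists_isCycle_length_le {u v : V} {W : G.Walk u v}
    (hW : W.IsNonBacktracking) {i j : ℕ} (hij : i < j) (hj : j ≤ W.length)
    (h : W.getVert i = W.getVert j) :
    ∃ (x : V) (c : G.Walk x x), c.IsCycle ∧ c.length ≤ j - i := by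
  induction hd : j - i using Nat.strong_induction_on generalizing i j with
  | _ d ih =>
  by_cases hshorter : ∃ a b, i ≤ a ∧ a < b ∧ b ≤ j ∧ W.getVert a = W.getVert b ∧ b - a < d
  · obtain ⟨a, b, hia, hab, hbj, hab_eq, hlt⟩ := hshorter
    obtain ⟨x, c, hc, hlen⟩ := ih (b - a) hlt hab (hbj.trans hj) hab_eq rfl
    exact ⟨x, c, hc, by omega⟩
  push Not at hshorter
  have hj' : j = i + d := by omega
  subst hj'
  have h3 : 3 ≤ d := by
    by_contra! hlt
    interval_cases d
    · omega
    · exact (W.adj_getVert_succ (by omega)).ne h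
    · exact hW.getVert_ne_getVert_add_two hj h
  have hinj : Set.InjOn (fun k => W.getVert (i + k)) (Set.Icc 1 d) := by
    intro k ⟨hk1, hk2⟩ m ⟨hm1, hm2⟩ hkm
    by_contra hne
    rcases Nat.lt_or_gt_of_ne hne with hlt | hlt
    · have := hshorter (i + k) (i + m) (by omega) (by omega) (by omega) hkm
      omega
    · have := hshorter (i + m) (i + k) (by omega) (by omega) (by omega) hkm.symm
      omega
  obtain ⟨c, hc, hlen⟩ := W.exists_isCycle_of_injOn_getVert h3 hj h hinj
  exact ⟨_, c, hc, by omega⟩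

end SimpleGraph.Walk

open SimpleGraph

/-- On a non-backtracking walk, two positions at distance less
than the girth carry distinct vertices. -/
theorem nonbacktracking_walk_getVert_ne {V : Type*} (G : SimpleGraph V) {u v : V}
    (W : G.Walk u v)
    (hnb : ∀ i : ℕ, 1 ≤ i → i + 1 ≤ W.length → W.getVert (i + 1) ≠ W.getVert (i - 1))
    (i j : ℕ) (hij : i < j) (hj : j ≤ W.length) (hgirth : ((j - i : ℕ) : ℕ∞) < G.egirth) :
    W.getVert i ≠ W.getVert j := by
  intro h
  obtain ⟨x, c, hc, hlen⟩ := Walk.IsNonBacktracking.exists_isCycle_length_le hnb hij hj h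
  have : G.egirth ≤ (j - i : ℕ) := (egirth_le_length hc).trans (by exact_mod_cast hlen)
  exact this.not_gt hgirth
end

section
/- Let G be a simple graph in which every vertex has degree at most 2, and let W be a walk of length ℓ in G with (ℓ + 1 : ℕ∞) < girth(G). Then the induced subgraphของ G on the set of vertices visited by W is isomorphic to the path graph on k vertices, where k is the number of distinct vertices visited by W. -/
/-!
An interior vertex of a path already has two neighbours on the path, so when all degrees are
at most 2 a walk can only leave the vertex set of a path through one of its ends; hence the
vertices visited by any walk are those of a single path, of length at most that of the walk.
A chord `x ~ y` of a walk of length `ℓ` closes, together with a path from `x` to `y` along the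
walk, a cycle of length at most `ℓ + 1`; below the girth there is none, so the induced subgraph
on the path's vertices is the path itself.
-/

namespace SimpleGraph.Walk

variable {V : Type*} {G : SimpleGraph V}

lemma IsPath.mem_support_of_adj_of_degree_le_two {u v x y : V} {p : G.Walk u v} (hp : p.IsPath)
    [Fintype (G.neighborSet x)] (hdeg : G.degree x ≤ 2) (hx : x ∈ p.support) (hxu : x ≠ u)
    (hxv : x ≠ v) (hxy : G.Adj x y) : y ∈ p.support := by
  obtain ⟨i, rfl, hi⟩ := mem_support_iff_exists_getVert.mp hx
  have hi0 : i ≠ 0 := by rintro rfl; exact hxu p.getVert_zero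
  have hil : i < p.length := lt_of_le_of_ne hi (by rintro rfl; exact hxv p.getVert_length)
  have hdeg' : (G.neighborSet (p.getVert i)).ncard ≤ 2 := by
    rwa [← Nat.card_coe_set_eq, Nat.card_eq_fintype_card, card_neighborSet_eq_degree]
  have hnbrs : p.toSubgraph.neighborSet (p.getVert i) = G.neighborSet (p.getVert i) :=
    Set.eq_of_subset_of_ncard_le (p.toSubgraph.neighborSet_subset _)
      (hp.ncard_neighborSet_toSubgraph_internal_eq_two hi0 hil ▸ hdeg') (Set.toFinite _)
  rw [← mem_neighborSet, ← hnbrs, Subgraph.mem_neighborSet] at hxy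
  exact p.mem_support_of_adj_toSubgraph hxy.symm

lemma exists_isPath_support_eq_of_degree_le_two [∀ x, Fintype (G.neighborSet x)]
    (hdeg : ∀ x, G.degree x ≤ 2) {u v : V} (W : G.Walk u v) :
    ∃ (a b : V) (P : G.Walk a b), P.IsPath ∧ ∀ y, y ∈ P.support ↔ y ∈ W.support := by
  induction W with
  | nil => exact ⟨_, _, nil, .nil, fun _ ↦ Iff.rfl⟩
  | @cons u x w hux W ih =>
    obtain ⟨a, b, P, hP, hPW⟩ := ih
    have hx : x ∈ P.support := (hPW x).mpr W.start_mem_support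
    by_cases hu : u ∈ P.support
    · refine ⟨a, b, P, hP, fun y ↦ ?_⟩
      rw [support_cons, List.mem_cons, ← hPW]
      exact ⟨Or.inr, by rintro (rfl | hy); exacts [hu, hy]⟩
    have hend : x = a ∨ x = b := by
      by_contra! hxab
      exact hu (hP.mem_support_of_adj_of_degree_le_two (hdeg x) hx hxab.1 hxab.2 hux.symm)
    obtain ⟨b', Q, hQ, hQP⟩ :
        ∃ (b' : V) (Q : G.Walk x b'), Q.IsPath ∧ ∀ y, y ∈ Q.support ↔ y ∈ P.support := by
      rcases hend with rfl | rfl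
      · exact ⟨b, P, hP, fun _ ↦ Iff.rfl⟩
      · exact ⟨a, P.reverse, hP.reverse, fun _ ↦ by rw [support_reverse, List.mem_reverse]⟩
    refine ⟨u, b', cons hux Q, hQ.cons (by rwa [hQP]), fun y ↦ ?_⟩
    simp only [support_cons, List.mem_cons, hQP, hPW]

lemma exists_isPath_edges_subset_of_mem_support [DecidableEq V] {u v x y : V} (p : G.Walk u v)
    (hx : x ∈ p.support) (hy : y ∈ p.support) :
    ∃ q : G.Walk x y, q.IsPath ∧ q.edges ⊆ p.edges ∧ q.length ≤ p.length := by
  suffices ∃ q : G.Walk x y, q.edges ⊆ p.edges ∧ q.length ≤ p.length by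
    obtain ⟨q, hqe, hql⟩ := this
    exact ⟨q.bypass, q.bypass_isPath, List.Subset.trans q.edges_bypass_subset_edges hqe,
      q.length_bypass_le_length.trans hql⟩
  rw [← p.take_spec hx, mem_support_append_iff] at hy
  rcases hy with hy | hy
  · refine ⟨((p.takeUntil x hx).dropUntil y hy).reverse, ?_, ?_⟩
    · rw [edges_reverse, List.reverse_subset]
      exact List.Subset.trans ((p.takeUntil x hx).edges_dropUntil_subset_edges hy)
        (p.edges_takeUntil_subset_edges hx)
    · rw [length_reverse]
      exact ((p.takeUntil x hx).length_dropUntil_le_length hy).trans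
        (p.length_takeUntil_le_length hx)
  · exact ⟨(p.dropUntil x hx).takeUntil y hy,
      List.Subset.trans ((p.dropUntil x hx).edges_takeUntil_subset_edges hy)
        (p.edges_dropUntil_subset_edges hx),
      ((p.dropUntil x hx).length_takeUntil_le_length hy).trans
        (p.length_dropUntil_le_length hx)⟩

lemma adj_toSubgraph_iff_of_length_lt_egirth {u v x y : V} (p : G.Walk u v)
    (hp : ((p.length + 1 : ℕ) : ℕ∞) < G.egirth) (hx : x ∈ p.support) (hy : y ∈ p.support) :
    p.toSubgraph.Adj x y ↔ G.Adj x y := by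
  classical
  refine ⟨fun h ↦ h.adj_sub, fun hxy ↦ ?_⟩
  rw [adj_toSubgraph_iff_mem_edges]
  by_contra hchord
  obtain ⟨q, hq, hqe, hql⟩ := p.exists_isPath_edges_subset_of_mem_support hx hy
  have hcycle : (cons hxy.symm q).IsCycle :=
    (cons_isCycle_iff q hxy.symm).mpr ⟨hq, fun h ↦ hchord (Sym2.eq_swap ▸ hqe h)⟩
  have hshort : G.egirth ≤ ((p.length + 1 : ℕ) : ℕ∞) :=
    (egirth_le_length hcycle).trans (by simpa using hql)
  exact hshort.not_gt hp

lemma toSubgraph_eq_induce_support_of_length_lt_egirth {u v : V} (p : G.Walk u v)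
    (hp : ((p.length + 1 : ℕ) : ℕ∞) < G.egirth) :
    p.toSubgraph = (⊤ : G.Subgraph).induce {x | x ∈ p.support} := by
  ext x y
  · simp
  · simp only [Subgraph.induce_adj, Set.mem_ofPred_eq, Subgraph.top_adj]
    exact ⟨fun h ↦ ⟨p.mem_support_of_adj_toSubgraph h, p.mem_support_of_adj_toSubgraph h.symm,
      h.adj_sub⟩, fun ⟨hx, hy, hxy⟩ ↦ (p.adj_toSubgraph_iff_of_length_lt_egirth hp hx hy).mpr hxy⟩

end SimpleGraph.Walk

open SimpleGraph Walk

/-- In a graph of maximum degree at most 2, the subgraph induced on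
the vertices visited by a walk of length `ℓ` with `ℓ + 1 < girth G` is isomorphic to
the path graph on `k` vertices, where `k` is the number of distinct vertices visited. -/
theorem induce_support_iso_pathGraph {V : Type*} [Fintype V] [DecidableEq V]
    (G : SimpleGraph V) [DecidableRel G.Adj]
    (hdeg : ∀ x : V, G.degree x ≤ 2)
    {u v : V} (W : G.Walk u v) (hgirth : ((W.length + 1 : ℕ) : ℕ∞) < G.egirth) :
    Nonempty
      (G.induce {x | x ∈ W.support} ≃g SimpleGraph.pathGraph W.support.toFinset.card) := by
  obtain ⟨a, b, P, hP, hPW⟩ := W.exists_isPath_support_eq_of_degree_le_two hdeg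
  have hcard : W.support.toFinset.card = P.length + 1 := by
    rw [← length_support, ← List.toFinset_card_of_nodup hP.support_nodup]
    congr 1
    ext y
    simp [hPW]
  have hlen : P.length ≤ W.length := by
    have := W.support.toFinset_card_le
    rw [hcard, length_support] at this
    omega
  have hsupp : {x | x ∈ W.support} = {x | x ∈ P.support} := by
    ext y
    exact (hPW y).symm
  have hinduced := P.toSubgraph_eq_induce_support_of_length_lt_egirth
    (lt_of_le_of_lt (by exact_mod_cast Nat.succ_le_succ hlen) hgirth)
  have e := hP.pathGraphIsoToSubgraph
  rw [hinduced, ← hsupp, ← induce_eq_coe_induce_top, ← hcard] at e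
  exact ⟨e.symm⟩
end

section
/- Let G be a simple graph in which every vertex has degree at most 2, and let W = (w_0, …, w_ℓ) and W' = (w'_0, …, w'_ℓ) be walks in G of the same length ℓ ≥ 1 with w_0 = w'_0 and w_1 = w'_1. If W and W' have the same backtracking pattern, i.e., for every 1 ≤ i ≤ ℓ − 1 one has w_{i+1} = w_{i−1} if and only if w'_{i+1} = w'_{i−1}, then w_i = w'_i for all 0 ≤ i ≤ ℓ. -/
/-
At a vertex of degree at most 2, a walk that does not backtrack must leave along the unique
neighbour other than the one it came from, and if it backtracks its next vertex is the previous
one. So two walks with the same backtracking pattern that agree on two consecutive vertices also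
agree on the next one, and induction from `w_0, w_1` finishes the proof.
-/

namespace SimpleGraph

variable {V : Type*} {G : SimpleGraph V}

theorem eq_of_adj_of_ne_of_degree_le_two {x a b c : V} [Fintype (G.neighborSet x)]
    (hdeg : G.degree x ≤ 2) (ha : G.Adj x a) (hb : G.Adj x b) (hc : G.Adj x c)
    (hba : b ≠ a) (hca : c ≠ a) : b = c := by
  by_contra hbc
  have h : 2 < (G.neighborFinset x).card :=
    Finset.two_lt_card.2 ⟨a, by simpa, b, by simpa, c, by simpa, hba.symm, hca.symm, hbc⟩
  rw [card_neighborFinset_eq_degree] at h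
  omega

namespace Walk

theorem getVert_add_two_eq_of_backtrack_iff [G.LocallyFinite] {u v u' v' : V}
    {p : G.Walk u v} {q : G.Walk u' v'} {n : ℕ}
    (hp : n + 2 ≤ p.length) (hq : n + 2 ≤ q.length) (hdeg : G.degree (p.getVert (n + 1)) ≤ 2)
    (h₀ : p.getVert n = q.getVert n) (h₁ : p.getVert (n + 1) = q.getVert (n + 1))
    (hpat : p.getVert (n + 2) = p.getVert n ↔ q.getVert (n + 2) = q.getVert n) :
    p.getVert (n + 2) = q.getVert (n + 2) := by
  by_cases hback : p.getVert (n + 2) = p.getVert n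
  · rw [hback, hpat.1 hback, h₀]
  · have hback' : q.getVert (n + 2) ≠ p.getVert n := h₀ ▸ mt hpat.2 hback
    have hprev := (p.adj_getVert_succ (i := n) (by omega)).symm
    have hnext := p.adj_getVert_succ (i := n + 1) (by omega)
    have hnext' := q.adj_getVert_succ (i := n + 1) (by omega)
    rw [← h₁] at hnext'
    exact eq_of_adj_of_ne_of_degree_le_two hdeg hprev hnext hnext' hback hback'

end Walk

end SimpleGraph

theorem walk_determined_by_backtracking_pattern_general {V : Type*} [Fintype V]
    (G : SimpleGraph V) [DecidableRel G.Adj]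
    (hdeg : ∀ x : V, G.degree x ≤ 2)
    {u v u' v' : V} (W : G.Walk u v) (W' : G.Walk u' v')
    (hlen : W'.length = W.length)
    (h0 : W.getVert 0 = W'.getVert 0) (h1 : W.getVert 1 = W'.getVert 1)
    (hpat : ∀ i : ℕ, 1 ≤ i → i + 1 ≤ W.length →
      (W.getVert (i + 1) = W.getVert (i - 1) ↔ W'.getVert (i + 1) = W'.getVert (i - 1))) :
    ∀ i : ℕ, i ≤ W.length → W.getVert i = W'.getVert i := by
  intro i
  induction i using Nat.twoStepInduction with
  | zero => exact fun _ => h0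
  | one => exact fun _ => h1
  | more n ih₀ ih₁ =>
    intro hn
    exact SimpleGraph.Walk.getVert_add_two_eq_of_backtrack_iff hn (hlen ▸ hn) (hdeg _)
      (ih₀ (by omega)) (ih₁ (by omega)) (hpat (n + 1) (by omega) hn)

/-- In a graph of maximum degree at most 2, a walk of length `ℓ ≥ 1`
is determined by its first two vertices together with its backtracking pattern:
if two walks of the same length agree on `w_0`, `w_1` and have the same backtracking
pattern, they agree everywhere. -/
theorem walk_determined_by_backtracking_pattern {V : Type*} [Fintype V]
    (G : SimpleGraph V) [DecidableRel G.Adj]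
    (hdeg : ∀ x : V, G.degree x ≤ 2)
    {u v u' v' : V} (W : G.Walk u v) (W' : G.Walk u' v')
    (hlen : W'.length = W.length) (hlen1 : 1 ≤ W.length)
    (h0 : W.getVert 0 = W'.getVert 0) (h1 : W.getVert 1 = W'.getVert 1)
    (hpat : ∀ i : ℕ, 1 ≤ i → i + 1 ≤ W.length →
      (W.getVert (i + 1) = W.getVert (i - 1) ↔ W'.getVert (i + 1) = W'.getVert (i - 1))) :
    ∀ i : ℕ, i ≤ W.length → W.getVert i = W'.getVert i :=
  walk_determined_by_backtracking_pattern_general G hdeg W W' hlen h0 h1 hpat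
end

section
/- Let G and G' be simple graphs in which every vertex has degree exactly 2, and let s ≥ 2 be a window size with (s + 1 : ℕ∞) < girth(G) and (s + 1 : ℕ∞) < girth(G'). Let W = (w_0, …, w_ℓ) be a walk in G and W' = (w'_0, …, w'_ℓ) a walk in G' of the same length ℓ having the same backtracking pattern, i.e., for every 1 ≤ i ≤ ℓ − 1 one has w_{i+1} = w_{i−1} if and only if w'_{i+1} = w'_{i−1}. Then W and W' have the same window-s structural feature: for all i and all 1 ≤ j ≤ s with i − j ≥ 0, w_i = w_{i−j} if and only if w'_i = w'_{i−j}, and for all 2 ≤ j ≤ s with i − j ≥ 0, w_i is adjacent to w_{i−j} in G if and only if w'_i is adjacent to w'_{i−j} in G'. -/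
/-!
In a 2-regular graph every walk `w` unrolls onto a line: there are a non-backtracking
bi-infinite walk `φ : ℤ → V` and positions `p k ∈ ℤ` with `w k = φ (p k)`, where
`p 0 = 0`, `p 1 = 1`, and `p (k + 1)` is `p (k - 1)` or `2 p k - p (k - 1)` according to
whether `w` backtracks at `k`. The positions depend only on the backtracking pattern, and
they move by `±1` at each step, so `|p i - p (i - j)| ≤ j ≤ s`. Along a non-backtracking
walk, a window shorter than the girth is a path without chords (a repetition or a chord
would close a cycle shorter than the girth), so `w i = w (i - j)` iff `p i = p (i - j)` and
`w i ~ w (i - j)` iff `|p i - p (i - j)| = 1`, in both graphs.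
-/

namespace SimpleGraph

variable {V : Type*} {G : SimpleGraph V}

namespace Walk

def ofSeq (f : ℕ → V) : (n : ℕ) → (∀ k < n, G.Adj (f k) (f (k + 1))) → G.Walk (f 0) (f n)
  | 0, _ => .nil
  | n + 1, h =>
    .cons (h 0 n.succ_pos) (ofSeq (fun k => f (k + 1)) n fun k hk => h (k + 1) (by omega))

@[simp]
lemma length_ofSeq (f : ℕ → V) (n : ℕ) (h : ∀ k < n, G.Adj (f k) (f (k + 1))) :
    (ofSeq f n h).length = n := by
  induction n generalizing f with
  | zero => rfl
  | succ n ih => simp [ofSeq, ih]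

lemma getVert_ofSeq (f : ℕ → V) (n : ℕ) (h : ∀ k < n, G.Adj (f k) (f (k + 1))) {k : ℕ}
    (hk : k ≤ n) : (ofSeq f n h).getVert k = f k := by
  induction n generalizing f k with
  | zero => simp_all [ofSeq]
  | succ n ih =>
    cases k with
    | zero => rfl
    | succ k => exact ih _ _ (by omega)

end Walk

lemma egirth_le_of_injOn_of_adj (f : ℕ → V) (n : ℕ) (h : ∀ k < n, G.Adj (f k) (f (k + 1)))
    (hinj : Set.InjOn f (Set.Iic n)) (hn : 2 ≤ n) (hclose : G.Adj (f n) (f 0)) :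
    G.egirth ≤ (n + 1 : ℕ) := by
  have hpath : (Walk.ofSeq f n h).IsPath := by
    rw [← Walk.IsPath.getVert_injOn_iff]
    intro x hx y hy hxy
    simp only [Set.mem_ofPred_eq, Walk.length_ofSeq] at hx hy
    rw [Walk.getVert_ofSeq _ _ _ hx, Walk.getVert_ofSeq _ _ _ hy] at hxy
    exact hinj hx hy hxy
  have hcycle : (Walk.cons hclose (Walk.ofSeq f n h)).IsCycle :=
    Walk.isCycle_iff_isPath_tail_and_le_length.mpr ⟨by simpa using hpath, by simp; omega⟩
  simpa using egirth_le_length hcycle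

structure IsNonbacktracking (G : SimpleGraph V) (φ : ℤ → V) : Prop where
  adj (n : ℤ) : G.Adj (φ n) (φ (n + 1))
  ne (n : ℤ) : φ (n + 2) ≠ φ n

lemma injOn_of_forall_apply_add_ne {φ : ℤ → V} {n : ℕ}
    (h : ∀ m : ℕ, 0 < m → m ≤ n → ∀ a, φ (a + m) ≠ φ a) (a : ℤ) :
    Set.InjOn (fun k : ℕ => φ (a + k)) (Set.Iic n) := by
  intro x hx y hy hxy
  by_contra hne
  wlog hlt : x < y generalizing x y
  · exact this hy hx hxy.symm (Ne.symm hne) (by omega)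
  simp only [Set.mem_Iic] at hx hy
  exact h (y - x) (by omega) (by omega) (a + x)
    (by simpa [Nat.cast_sub hlt.le, add_assoc] using hxy.symm)

namespace IsNonbacktracking

variable {φ : ℤ → V}

lemma apply_add_ne (hφ : G.IsNonbacktracking φ) {m : ℕ} (hm : 0 < m)
    (hmg : (m : ℕ∞) < G.egirth) (a : ℤ) : φ (a + m) ≠ φ a := by
  induction m using Nat.strong_induction_on generalizing a with
  | _ m ih =>
  intro heq
  obtain rfl | rfl | hm3 : m = 1 ∨ m = 2 ∨ 3 ≤ m := by omega
  · exact (hφ.adj a).ne heq.symm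
  · exact hφ.ne a heq
  · have hinj := injOn_of_forall_apply_add_ne (n := m - 1)
      (fun m' hm' hm'm => ih m' (by omega) hm' (lt_of_le_of_lt (by norm_cast; omega) hmg)) a
    have hclose : G.Adj (φ (a + (m - 1 : ℕ))) (φ (a + (0 : ℕ))) := by
      have h := hφ.adj (a + (m - 1 : ℕ))
      rw [show a + ((m - 1 : ℕ) : ℤ) + 1 = a + m by omega, heq] at h
      simpa using h
    have := egirth_le_of_injOn_of_adj _ (m - 1)
      (fun k _ => by simpa [add_assoc] using hφ.adj (a + k)) hinj (by omega) hclose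
    rw [Nat.sub_add_cancel (by omega)] at this
    exact hmg.not_ge this

lemma apply_eq_apply_iff (hφ : G.IsNonbacktracking φ) {x y : ℤ}
    (h : ((x - y).natAbs : ℕ∞) < G.egirth) : φ x = φ y ↔ x = y := by
  refine ⟨fun hxy => ?_, congrArg φ⟩
  by_contra hne
  wlog hlt : y < x generalizing x y
  · exact this (by rwa [← Int.natAbs_neg, neg_sub]) hxy.symm (Ne.symm hne) (by omega)
  refine hφ.apply_add_ne (m := (x - y).natAbs) (by omega) h y ?_
  rwa [Int.natCast_natAbs, abs_of_pos (by omega), add_sub_cancel]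

lemma not_adj_apply_add (hφ : G.IsNonbacktracking φ) {m : ℕ} (hm : 2 ≤ m)
    (hmg : ((m + 1 : ℕ) : ℕ∞) < G.egirth) (a : ℤ) : ¬ G.Adj (φ (a + m)) (φ a) := by
  intro hadj
  have hinj := injOn_of_forall_apply_add_ne (n := m)
    (fun m' hm' hm'm => hφ.apply_add_ne hm' (lt_of_le_of_lt (by norm_cast; omega) hmg)) a
  have := egirth_le_of_injOn_of_adj _ m
    (fun k _ => by simpa [add_assoc] using hφ.adj (a + k)) hinj hm (by simpa using hadj)
  exact hmg.not_ge this

lemma adj_apply_iff (hφ : G.IsNonbacktracking φ) {x y : ℤ}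
    (h : (((x - y).natAbs + 1 : ℕ) : ℕ∞) < G.egirth) :
    G.Adj (φ x) (φ y) ↔ (x - y).natAbs = 1 := by
  wlog hlt : y ≤ x generalizing x y
  · rw [G.adj_comm, ← Int.natAbs_neg, neg_sub]
    exact this (by rwa [← Int.natAbs_neg, neg_sub]) (by omega)
  obtain ⟨m, rfl⟩ : ∃ m : ℕ, x = y + m := ⟨(x - y).toNat, by omega⟩
  simp only [add_sub_cancel_left, Int.natAbs_natCast] at h ⊢
  obtain rfl | rfl | hm := (by omega : m = 0 ∨ m = 1 ∨ 2 ≤ m)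
  · simp
  · simpa using (hφ.adj y).symm
  · simpa [show m ≠ 1 by omega] using hφ.not_adj_apply_add hm h y

end IsNonbacktracking

namespace IsRegularOfDegree

variable [G.LocallyFinite]

lemma exists_adj_ne (hG : G.IsRegularOfDegree 2) (v a : V) : ∃ c, G.Adj v c ∧ c ≠ a := by
  obtain ⟨c, hc, hca⟩ := Finset.exists_mem_ne (s := G.neighborFinset v) (by simp [hG v]) a
  exact ⟨c, (G.mem_neighborFinset v c).mp hc, hca⟩

lemma adj_iff_of_ne (hG : G.IsRegularOfDegree 2) {v a b c : V} (ha : G.Adj v a)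
    (hb : G.Adj v b) (hab : a ≠ b) : G.Adj v c ↔ c = a ∨ c = b := by
  classical
  have : G.neighborFinset v = {a, b} := by
    refine (Finset.eq_of_subset_of_card_le (fun x hx => ?_) ?_).symm
    · simp only [Finset.mem_insert, Finset.mem_singleton] at hx
      rcases hx with rfl | rfl <;> simpa
    · rw [card_neighborFinset_eq_degree, hG v, Finset.card_pair hab]
  rw [← mem_neighborFinset, this, Finset.mem_insert, Finset.mem_singleton]

lemma exists_isNonbacktracking (hG : G.IsRegularOfDegree 2) {u v : V} (huv : G.Adj u v) :
    ∃ φ : ℤ → V, G.IsNonbacktracking φ ∧ φ 0 = u ∧ φ 1 = v := by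
  choose o hadj hne using hG.exists_adj_ne
  have o_o {v a : V} (ha : G.Adj v a) : o v (o v a) = a :=
    ((hG.adj_iff_of_ne ha (hadj v a) (hne v a).symm).mp (hadj v _)).resolve_right (hne v _)
  -- `next` moves a dart one step straight on; since `o v (o v a) = a` it is inverted by
  -- reversing, moving on and reversing again, so its integer powers define `φ`.
  let next (d : G.Dart) : G.Dart := ⟨(d.snd, o d.snd d.fst), hadj _ _⟩
  have next_symm_next (d : G.Dart) : next (next d).symm = d.symm := by
    ext <;> simp [next, o_o d.adj.symm]
  let σ : Equiv.Perm G.Dart :=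
    ⟨next, fun d => (next d.symm).symm, fun d => by simp [next_symm_next],
      fun d => by simpa using next_symm_next d.symm⟩
  have fst_succ (n : ℤ) (d : G.Dart) : ((σ ^ (n + 1)) d).fst = ((σ ^ n) d).snd := by
    rw [add_comm, zpow_add, zpow_one, Equiv.Perm.mul_apply]; rfl
  refine ⟨fun n => ((σ ^ n) ⟨(u, v), huv⟩).fst, ⟨fun n => ?_, fun n => ?_⟩, rfl, ?_⟩
  · simp only [fst_succ]
    exact ((σ ^ n) ⟨(u, v), huv⟩).adj
  · simp only [show n + 2 = n + 1 + 1 by ring, fst_succ]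
    rw [add_comm, zpow_add, zpow_one, Equiv.Perm.mul_apply]
    exact hne _ _
  · simpa using fst_succ 0 ⟨(u, v), huv⟩

lemma adj_apply_iff (hG : G.IsRegularOfDegree 2) {φ : ℤ → V} (hφ : G.IsNonbacktracking φ)
    (y : ℤ) {w : V} : G.Adj (φ y) w ↔ w = φ (y - 1) ∨ w = φ (y + 1) := by
  refine hG.adj_iff_of_ne ?_ (hφ.adj y) ?_
  · simpa using (hφ.adj (y - 1)).symm
  · simpa [show y - 1 + 2 = y + 1 by ring] using (hφ.ne (y - 1)).symm

end IsRegularOfDegree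

/-- The position `p k` on the unrolled line of the `k`-th vertex of a walk whose backtracking
pattern is `b`, i.e. `b i ↔ w (i + 1) = w (i - 1)`. -/
def backtrackPos (b : ℕ → Prop) [DecidablePred b] : ℕ → ℤ
  | 0 => 0
  | 1 => 1
  | k + 2 =>
    if b (k + 1) then backtrackPos b k else 2 * backtrackPos b (k + 1) - backtrackPos b k

lemma natAbs_backtrackPos_succ_sub (b : ℕ → Prop) [DecidablePred b] (k : ℕ) :
    (backtrackPos b (k + 1) - backtrackPos b k).natAbs = 1 := by
  induction k with
  | zero => rfl
  | succ k ih =>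
    rw [backtrackPos]
    split_ifs <;> omega

lemma natAbs_backtrackPos_add_sub_le (b : ℕ → Prop) [DecidablePred b] (a m : ℕ) :
    (backtrackPos b (a + m) - backtrackPos b a).natAbs ≤ m := by
  induction m with
  | zero => simp
  | succ m ih => have := natAbs_backtrackPos_succ_sub b (a + m); rw [← add_assoc]; omega

lemma IsRegularOfDegree.exists_unrolling [G.LocallyFinite] (hG : G.IsRegularOfDegree 2)
    {u v : V} (W : G.Walk u v) (hW : 0 < W.length) (b : ℕ → Prop) [DecidablePred b]
    (hb : ∀ i, 1 ≤ i → i + 1 ≤ W.length → (b i ↔ W.getVert (i + 1) = W.getVert (i - 1))) :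
    ∃ φ : ℤ → V, G.IsNonbacktracking φ ∧
      ∀ k ≤ W.length, W.getVert k = φ (backtrackPos b k) := by
  obtain ⟨φ, hφ, hφ0, hφ1⟩ := hG.exists_isNonbacktracking (W.adj_getVert_succ hW)
  have step : ∀ k, k + 1 ≤ W.length → W.getVert k = φ (backtrackPos b k) ∧
      W.getVert (k + 1) = φ (backtrackPos b (k + 1)) := by
    intro k
    induction k with
    | zero => exact fun _ => ⟨hφ0.symm, hφ1.symm⟩
    | succ k ih =>
      intro hk
      obtain ⟨hk0, hk1⟩ := ih (by omega)
      refine ⟨hk1, ?_⟩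
      have hunit := natAbs_backtrackPos_succ_sub b k
      have hnbr := (hG.adj_apply_iff hφ _).mp
        (hk1 ▸ W.adj_getVert_succ (i := k + 1) (by omega))
      rw [backtrackPos]
      split_ifs with hback
      · rw [← hk0]; exact (hb (k + 1) (by omega) hk).mp hback
      · -- `p k` is one of `p (k + 1) ± 1` and `w (k + 2)` is the neighbour at the other one
        have hne : W.getVert (k + 2) ≠ φ (backtrackPos b k) :=
          hk0 ▸ fun h => hback ((hb (k + 1) (by omega) hk).mpr h)
        rcases hnbr with h | h <;> rw [h] at hne ⊢ <;> congr 1 <;>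
          have := mt (congrArg φ) hne <;> omega
  refine ⟨φ, hφ, fun k hk => ?_⟩
  rcases k with _ | k
  · exact (step 0 hW).1
  · exact (step k hk).2

end SimpleGraph

theorem two_regular_same_pattern_same_feature_general {V V' : Type*} [Fintype V] [Fintype V']
    (G : SimpleGraph V) (G' : SimpleGraph V')
    [DecidableRel G.Adj] [DecidableRel G'.Adj]
    (h2reg : ∀ x : V, G.degree x = 2) (h2reg' : ∀ x : V', G'.degree x = 2)
    (s : ℕ)
    (hgirth : ((s + 1 : ℕ) : ℕ∞) < G.egirth) (hgirth' : ((s + 1 : ℕ) : ℕ∞) < G'.egirth)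
    {u v : V} {u' v' : V'} (W : G.Walk u v) (W' : G'.Walk u' v')
    (hlen : W'.length = W.length)
    (hpat : ∀ i : ℕ, 1 ≤ i → i + 1 ≤ W.length →
      (W.getVert (i + 1) = W.getVert (i - 1) ↔ W'.getVert (i + 1) = W'.getVert (i - 1))) :
    (∀ i j : ℕ, i ≤ W.length → 1 ≤ j → j ≤ s → j ≤ i →
      (W.getVert i = W.getVert (i - j) ↔ W'.getVert i = W'.getVert (i - j))) ∧
    (∀ i j : ℕ, i ≤ W.length → 2 ≤ j → j ≤ s → j ≤ i →
      (G.Adj (W.getVert i) (W.getVert (i - j)) ↔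
        G'.Adj (W'.getVert i) (W'.getVert (i - j)))) := by
  classical
  rcases Nat.eq_zero_or_pos W.length with h0 | hpos
  · exact ⟨fun i j hi hj _ hji => by omega, fun i j hi hj _ hji => by omega⟩
  have hG : G.IsRegularOfDegree 2 := h2reg
  have hG' : G'.IsRegularOfDegree 2 := h2reg'
  set b := fun i => W.getVert (i + 1) = W.getVert (i - 1)
  obtain ⟨φ, hφ, hWφ⟩ := hG.exists_unrolling W hpos b fun _ _ _ => Iff.rfl
  obtain ⟨φ', hφ', hWφ'⟩ := hG'.exists_unrolling W' (hlen ▸ hpos) b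
    fun i hi1 hi2 => hpat i hi1 (hlen ▸ hi2)
  set p := SimpleGraph.backtrackPos b
  have hnear (i j : ℕ) (hjs : j ≤ s) (hji : j ≤ i) : (p i - p (i - j)).natAbs ≤ s := by
    have := SimpleGraph.natAbs_backtrackPos_add_sub_le b (i - j) j
    rw [Nat.sub_add_cancel hji] at this
    exact this.trans hjs
  have hgap {d : ℕ} (hd : d ≤ s) {H : ℕ∞} (hH : ((s + 1 : ℕ) : ℕ∞) < H) :
      (d : ℕ∞) < H ∧ ((d + 1 : ℕ) : ℕ∞) < H :=
    ⟨lt_of_le_of_lt (by norm_cast; omega) hH, lt_of_le_of_lt (by norm_cast; omega) hH⟩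
  refine ⟨fun i j hi _ hjs hji => ?_, fun i j hi _ hjs hji => ?_⟩
  · rw [hWφ i hi, hWφ (i - j) (by omega), hWφ' i (by omega), hWφ' (i - j) (by omega),
      hφ.apply_eq_apply_iff (hgap (hnear i j hjs hji) hgirth).1,
      hφ'.apply_eq_apply_iff (hgap (hnear i j hjs hji) hgirth').1]
  · rw [hWφ i hi, hWφ (i - j) (by omega), hWφ' i (by omega), hWφ' (i - j) (by omega),
      hφ.adj_apply_iff (hgap (hnear i j hjs hji) hgirth).2,
      hφ'.adj_apply_iff (hgap (hnear i j hjs hji) hgirth').2]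

/-- Let `G`, `G'` be 2-regular graphs, and `s ≥ 2` a window size with
`s + 1` less than both girths. If walks `W` in `G` and `W'` in `G'` have the same length
and the same backtracking pattern, then they have the same window-`s` structural
feature: equality indicators agree, and adjacency indicators agree. -/
theorem two_regular_same_pattern_same_feature {V V' : Type*} [Fintype V] [Fintype V']
    (G : SimpleGraph V) (G' : SimpleGraph V')
    [DecidableRel G.Adj] [DecidableRel G'.Adj]
    (h2reg : ∀ x : V, G.degree x = 2) (h2reg' : ∀ x : V', G'.degree x = 2)
    (s : ℕ) (hs : 2 ≤ s)
    (hgirth : ((s + 1 : ℕ) : ℕ∞) < G.egirth) (hgirth' : ((s + 1 : ℕ) : ℕ∞) < G'.egirth)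
    {u v : V} {u' v' : V'} (W : G.Walk u v) (W' : G'.Walk u' v')
    (hlen : W'.length = W.length)
    (hpat : ∀ i : ℕ, 1 ≤ i → i + 1 ≤ W.length →
      (W.getVert (i + 1) = W.getVert (i - 1) ↔ W'.getVert (i + 1) = W'.getVert (i - 1))) :
    (∀ i j : ℕ, i ≤ W.length → 1 ≤ j → j ≤ s → j ≤ i →
      (W.getVert i = W.getVert (i - j) ↔ W'.getVert i = W'.getVert (i - j))) ∧
    (∀ i j : ℕ, i ≤ W.length → 2 ≤ j → j ≤ s → j ≤ i →
      (G.Adj (W.getVert i) (W.getVert (i - j)) ↔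
        G'.Adj (W'.getVert i) (W'.getVert (i - j)))) :=
  two_regular_same_pattern_same_feature_general G G' h2reg h2reg' s hgirth hgirth' W W' hlen hpat
end

section
/- Let n ≥ 6 be even, let s ≥ 2 be a window size with 2(s + 1) < n, and let ℓ ≥ 1. Let G be the cycle graph on n vertices and let G' be the disjoint union of two cycle graphs on n/2 vertices each. Then for every possible window-s structural feature F, the number of walks of length ℓ in G whose window-s structural feature equals F is equal to the number of walks of length ℓ in G' whose window-s structural feature equals F. (Consequently, random walks of any length in the two graphs induce identical distributions of walk feature matrices, so the two graphs are indistinguishable by CRaWl with window size s.) -/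
/-!
The cycle on `n` vertices and the two cycles on `n / 2` vertices are both the graph of a
permutation (`x ↦ x + 1` on `Fin n`, resp. on both copies of `Fin (n / 2)`) whose orbits are
longer than `s + 1`. A walk in the graph of a permutation `f` is a start vertex `u` together with a
sequence of steps `±1`, and its `i`-th vertex is `f ^ Sᵢ u` for the `i`-th partial sum `Sᵢ`.
Partial sums at most `s` apart differ by at most `s`, so, orbits being long, two such vertices
coincide iff the partial sums agree, and are adjacent iff the partial sums differ by `1`.
Hence the window-`s` feature of a walk is a function of its steps alone, and both counts are
`n` times the number of step sequences of length `ℓ` with the given feature.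
-/

/-- The window-`s` structural feature of the walk `W` equals the feature described by
the indicator functions `Feq` (equality indicators, for gaps `1 ≤ j ≤ s`) and
`Fadj` (adjacency indicators, for gaps `2 ≤ j ≤ s`); indicators for `i - j < 0`
are `0` on both sides by convention, hence not constrained. -/
def windowFeatureEq {V : Type*} (G : SimpleGraph V) {u v : V} (W : G.Walk u v)
    (s : ℕ) (Feq Fadj : ℕ → ℕ → Bool) : Prop :=
  (∀ i j : ℕ, i ≤ W.length → 1 ≤ j → j ≤ s → j ≤ i →
    (W.getVert i = W.getVert (i - j) ↔ Feq i j = true)) ∧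
  (∀ i j : ℕ, i ≤ W.length → 2 ≤ j → j ≤ s → j ≤ i →
    (G.Adj (W.getVert i) (W.getVert (i - j)) ↔ Fadj i j = true))

open Equiv

namespace Equiv.Perm

variable {V W : Type*} {f : Perm V} {g : Perm W}

def IsAperiodicUpTo (f : Perm V) (r : ℕ) : Prop :=
  ∀ x (d : ℤ), (f ^ d) x = x → |d| ≤ r → d = 0

theorem IsAperiodicUpTo.zpow_apply_eq_zpow_apply_iff {r : ℕ} (hf : f.IsAperiodicUpTo r)
    {a b : ℤ} (hab : |a - b| ≤ r) (x : V) : (f ^ a) x = (f ^ b) x ↔ a = b := by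
  refine ⟨fun h => sub_eq_zero.mp (hf ((f ^ b) x) (a - b) ?_ hab), fun h => h ▸ rfl⟩
  rwa [← mul_apply, ← zpow_add, sub_add_cancel]

theorem sumCongr_zpow (f : Perm V) (g : Perm W) (d : ℤ) :
    f.sumCongr g ^ d = (f ^ d).sumCongr (g ^ d) :=
  (map_zpow (sumCongrHom V W) (f, g) d).symm

theorem IsAperiodicUpTo.sumCongr {r : ℕ} (hf : f.IsAperiodicUpTo r) (hg : g.IsAperiodicUpTo r) :
    (f.sumCongr g).IsAperiodicUpTo r := by
  rintro (x | x) d h hd <;> simp only [sumCongr_zpow, sumCongr_apply, Sum.map_inl, Sum.map_inr,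
    Sum.inl.injEq, Sum.inr.injEq] at h
  exacts [hf x d h hd, hg x d h hd]

theorem isAperiodicUpTo_addRight_one {m r : ℕ} (h : r < m + 2) :
    (Equiv.addRight (1 : Fin (m + 2))).IsAperiodicUpTo r := by
  intro x d hx hd
  rw [zsmul_addRight, coe_addRight, add_eq_left, ← addOrderOf_dvd_iff_zsmul_eq_zero,
    show addOrderOf (1 : Fin (m + 2)) = m + 2 from ZMod.addOrderOf_one (m + 2)] at hx
  exact Int.eq_zero_of_abs_lt_dvd hx (by omega)

end Equiv.Perm

namespace SimpleGraph

variable {V W : Type*} {G : SimpleGraph V} {H : SimpleGraph W} {f : Perm V} {g : Perm W}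

def IsPermGraph (G : SimpleGraph V) (f : Perm V) : Prop :=
  ∀ x y, G.Adj x y ↔ y = f x ∨ x = f y

theorem IsPermGraph.sum (hG : G.IsPermGraph f) (hH : H.IsPermGraph g) :
    (G ⊕g H).IsPermGraph (f.sumCongr g) := by
  rintro (x | x) (y | y) <;> simp [hG _ _, hH _ _]

theorem isPermGraph_cycleGraph (m : ℕ) :
    (cycleGraph (m + 2)).IsPermGraph (Equiv.addRight 1) := by
  intro x y
  simp only [cycleGraph_adj, coe_addRight]
  rw [sub_eq_iff_eq_add', sub_eq_iff_eq_add', or_comm]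

theorem IsPermGraph.adj_zpow_apply_iff (hG : G.IsPermGraph f) {r : ℕ}
    (hf : f.IsAperiodicUpTo r) {a b : ℤ} (hab : |a - b| < r) (x : V) :
    G.Adj ((f ^ a) x) ((f ^ b) x) ↔ |a - b| = 1 := by
  have hsucc (c : ℤ) : f ((f ^ c) x) = (f ^ (1 + c)) x := by rw [zpow_one_add, Perm.mul_apply]
  have hab' := abs_lt.mp hab
  rw [hG, hsucc, hsucc, hf.zpow_apply_eq_zpow_apply_iff (abs_le.mpr ⟨by omega, by omega⟩),
    hf.zpow_apply_eq_zpow_apply_iff (abs_le.mpr ⟨by omega, by omega⟩), abs_eq zero_le_one]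
  omega

theorem IsPermGraph.adj_zpow_units_apply (hG : G.IsPermGraph f) (u : V) (ε : ℤˣ) :
    G.Adj u ((f ^ (ε : ℤ)) u) := by
  rw [hG]
  rcases Int.units_eq_one_or ε with rfl | rfl <;> simp

def walkOfSteps (hG : G.IsPermGraph f) : (u : V) → List ℤˣ → Σ v, G.Walk u v
  | u, [] => ⟨u, .nil⟩
  | u, ε :: σ => ⟨_, .cons (hG.adj_zpow_units_apply u ε) (walkOfSteps hG ((f ^ (ε : ℤ)) u) σ).2⟩

def partialSum (σ : List ℤˣ) (i : ℕ) : ℤ := ((σ.take i).map (↑)).sum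

theorem abs_sum_units_le_length (L : List ℤˣ) : |(L.map ((↑) : ℤˣ → ℤ)).sum| ≤ L.length := by
  induction L with
  | nil => simp
  | cons ε L ih =>
    rw [List.map_cons, List.sum_cons, List.length_cons, Nat.cast_succ, add_comm _ 1]
    exact (abs_add_le _ _).trans (add_le_add (Int.isUnit_iff_abs_eq.mp ε.isUnit).le ih)

theorem abs_partialSum_add_sub_le (σ : List ℤˣ) (i k : ℕ) :
    |partialSum σ (i + k) - partialSum σ i| ≤ k := by
  rw [partialSum, partialSum, List.take_add, List.map_append, List.sum_append, add_sub_cancel_left]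
  exact (abs_sum_units_le_length _).trans (mod_cast List.length_take_le _ _)

theorem abs_partialSum_sub_le (σ : List ℤˣ) {i j : ℕ} (hji : j ≤ i) :
    |partialSum σ i - partialSum σ (i - j)| ≤ j := by
  simpa [Nat.sub_add_cancel hji] using abs_partialSum_add_sub_le σ (i - j) j

@[simp]
theorem length_walkOfSteps (hG : G.IsPermGraph f) (u : V) (σ : List ℤˣ) :
    (walkOfSteps hG u σ).2.length = σ.length := by
  induction σ generalizing u with
  | nil => rfl
  | cons ε σ ih => simp [walkOfSteps, ih]

@[simp]
theorem getVert_walkOfSteps (hG : G.IsPermGraph f) (u : V) (σ : List ℤˣ) (i : ℕ) :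
    (walkOfSteps hG u σ).2.getVert i = (f ^ partialSum σ i) u := by
  induction σ generalizing u i with
  | nil => simp [walkOfSteps, partialSum]
  | cons ε σ ih =>
    cases i with
    | zero => simp [walkOfSteps, partialSum]
    | succ i =>
      rw [walkOfSteps, Walk.getVert_cons_succ, ih]
      simp only [partialSum, List.take_succ_cons, List.map_cons, List.sum_cons]
      rw [add_comm, zpow_add, Perm.mul_apply]

def StepFeatureEq (σ : List ℤˣ) (s : ℕ) (Feq Fadj : ℕ → ℕ → Bool) : Prop :=
  (∀ i j : ℕ, i ≤ σ.length → 1 ≤ j → j ≤ s → j ≤ i →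
    (partialSum σ i = partialSum σ (i - j) ↔ Feq i j = true)) ∧
  (∀ i j : ℕ, i ≤ σ.length → 2 ≤ j → j ≤ s → j ≤ i →
    (|partialSum σ i - partialSum σ (i - j)| = 1 ↔ Fadj i j = true))

theorem windowFeatureEq_walkOfSteps_iff (hG : G.IsPermGraph f) {s : ℕ}
    (hf : f.IsAperiodicUpTo (s + 1)) (Feq Fadj : ℕ → ℕ → Bool) (u : V) (σ : List ℤˣ) :
    windowFeatureEq G (walkOfSteps hG u σ).2 s Feq Fadj ↔ StepFeatureEq σ s Feq Fadj := by
  simp only [windowFeatureEq, StepFeatureEq, length_walkOfSteps, getVert_walkOfSteps]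
  refine and_congr (forall₂_congr fun i j => ?_) (forall₂_congr fun i j => ?_) <;>
    refine forall_congr' fun _ => forall_congr' fun _ => forall_congr' fun hjs =>
      forall_congr' fun hji => ?_ <;>
    have hbound : |partialSum σ i - partialSum σ (i - j)| ≤ s :=
      (abs_partialSum_sub_le σ hji).trans (mod_cast hjs)
  · rw [hf.zpow_apply_eq_zpow_apply_iff (by push_cast; linarith)]
  · rw [hG.adj_zpow_apply_iff hf (by push_cast; linarith)]

variable [DecidableEq V]

def stepsOfWalk (f : Perm V) : {u v : V} → G.Walk u v → List ℤˣ
  | _, _, .nil => []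
  | u, _, .cons (v := x) _ W => (if x = f u then 1 else -1) :: stepsOfWalk f W

theorem walkOfSteps_stepsOfWalk (hG : G.IsPermGraph f) {u v : V} (W : G.Walk u v) :
    walkOfSteps hG u (stepsOfWalk f W) = ⟨v, W⟩ := by
  induction W with
  | nil => rfl
  | @cons u x v h W ih =>
    have hx : (f ^ ((if x = f u then 1 else -1 : ℤˣ) : ℤ)) u = x := by
      split_ifs with hxu
      · simp [hxu]
      · rcases (hG u x).mp h with h' | h'
        · exact absurd h' hxu
        · simp [h']
    rw [stepsOfWalk]
    -- replacing `x` by `(f ^ ε) u` makes the recursive call of `walkOfSteps` the one in `ih`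
    generalize (if x = f u then 1 else -1 : ℤˣ) = ε at hx
    subst hx
    rw [walkOfSteps, ih]

theorem stepsOfWalk_walkOfSteps (hG : G.IsPermGraph f) (hf : ∀ x, (f ^ (2 : ℤ)) x ≠ x)
    (u : V) (σ : List ℤˣ) : stepsOfWalk f (walkOfSteps hG u σ).2 = σ := by
  induction σ generalizing u with
  | nil => rfl
  | cons ε σ ih =>
    rw [walkOfSteps, stepsOfWalk, ih]
    rcases Int.units_eq_one_or ε with rfl | rfl
    · simp
    · have : f.symm u ≠ f u := fun h =>
        hf u (by rw [zpow_two, Perm.mul_apply, ← h, apply_symm_apply])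
      simp [this]

def walkEquivSteps (hG : G.IsPermGraph f) (hf : ∀ x, (f ^ (2 : ℤ)) x ≠ x) :
    (Σ u v, G.Walk u v) ≃ V × List ℤˣ where
  toFun p := (p.1, stepsOfWalk f p.2.2)
  invFun q := ⟨q.1, walkOfSteps hG q.1 q.2⟩
  left_inv := fun ⟨u, v, W⟩ => by simp only [walkOfSteps_stepsOfWalk hG W]
  right_inv := fun ⟨u, σ⟩ => by simp only [stepsOfWalk_walkOfSteps hG hf]

theorem card_walks_windowFeatureEq (hG : G.IsPermGraph f) {s : ℕ} (hs : 1 ≤ s)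
    (hf : f.IsAperiodicUpTo (s + 1)) (ℓ : ℕ) (Feq Fadj : ℕ → ℕ → Bool) :
    Nat.card {p : Σ u v, G.Walk u v // p.2.2.length = ℓ ∧ windowFeatureEq G p.2.2 s Feq Fadj} =
      Nat.card V * Nat.card {σ : List ℤˣ // σ.length = ℓ ∧ StepFeatureEq σ s Feq Fadj} := by
  have hf2 (x : V) : (f ^ (2 : ℤ)) x ≠ x := fun h => two_ne_zero (hf x 2 h (by simp; omega))
  rw [← Nat.card_prod]
  symm
  refine Nat.card_congr ((Equiv.sigmaEquivProd _ _).symm.trans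
    ((Equiv.subtypeProdEquivSigmaSubtype fun _ σ => σ.length = ℓ ∧ StepFeatureEq σ s Feq Fadj).symm
      |>.trans ((walkEquivSteps hG hf2).symm.subtypeEquiv fun q => ?_)))
  simp [walkEquivSteps, windowFeatureEq_walkOfSteps_iff hG hf]

end SimpleGraph

open SimpleGraph Equiv.Perm in
theorem cycle_vs_two_cycles_feature_count_general (n s ℓ : ℕ) (hn : Even n)
    (hs : 2 ≤ s) (hsn : 2 * (s + 1) < n) (Feq Fadj : ℕ → ℕ → Bool) :
    Nat.card {p : (u : Fin n) × (v : Fin n) × (SimpleGraph.cycleGraph n).Walk u v //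
        p.2.2.length = ℓ ∧ windowFeatureEq (SimpleGraph.cycleGraph n) p.2.2 s Feq Fadj} =
    Nat.card {p : (u : Fin (n / 2) ⊕ Fin (n / 2)) × (v : Fin (n / 2) ⊕ Fin (n / 2)) ×
          (SimpleGraph.cycleGraph (n / 2) ⊕g SimpleGraph.cycleGraph (n / 2)).Walk u v //
        p.2.2.length = ℓ ∧
        windowFeatureEq (SimpleGraph.cycleGraph (n / 2) ⊕g SimpleGraph.cycleGraph (n / 2))
          p.2.2 s Feq Fadj} := by
  obtain ⟨m, rfl⟩ : ∃ m, n = 2 * m + 2 + 2 := by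
    obtain ⟨t, rfl⟩ := hn
    exact ⟨t - 2, by omega⟩
  have hcycle := isAperiodicUpTo_addRight_one (m := m) (r := s + 1) (by omega)
  rw [show (2 * m + 2 + 2) / 2 = m + 2 by omega,
    card_walks_windowFeatureEq (isPermGraph_cycleGraph _) (by omega)
      (isAperiodicUpTo_addRight_one (by omega)),
    card_walks_windowFeatureEq ((isPermGraph_cycleGraph _).sum (isPermGraph_cycleGraph _))
      (by omega) (hcycle.sumCongr hcycle), Nat.card_sum]
  simp only [Nat.card_eq_fintype_card, Fintype.card_fin]
  ring

/-- Let `n ≥ 6` be even, `s ≥ 2` a window size with `2(s+1) < n`, and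
`ℓ ≥ 1`. Then for every possible window-`s` structural feature (given by indicator
functions `Feq`, `Fadj`), the cycle graph on `n` vertices and the disjoint union of two
cycle graphs on `n/2` vertices contain the same number of walks of length `ℓ` with that
feature. Hence the two graphs are indistinguishable by CRaWl with window size `s`. -/
theorem cycle_vs_two_cycles_feature_count (n s ℓ : ℕ) (hn6 : 6 ≤ n) (hn : Even n)
    (hs : 2 ≤ s) (hsn : 2 * (s + 1) < n) (hℓ : 1 ≤ ℓ) (Feq Fadj : ℕ → ℕ → Bool) :
    Nat.card {p : (u : Fin n) × (v : Fin n) × (SimpleGraph.cycleGraph n).Walk u v //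
        p.2.2.length = ℓ ∧ windowFeatureEq (SimpleGraph.cycleGraph n) p.2.2 s Feq Fadj} =
    Nat.card {p : (u : Fin (n / 2) ⊕ Fin (n / 2)) × (v : Fin (n / 2) ⊕ Fin (n / 2)) ×
          (SimpleGraph.cycleGraph (n / 2) ⊕g SimpleGraph.cycleGraph (n / 2)).Walk u v //
        p.2.2.length = ℓ ∧
        windowFeatureEq (SimpleGraph.cycleGraph (n / 2) ⊕g SimpleGraph.cycleGraph (n / 2))
          p.2.2 s Feq Fadj} :=
  cycle_vs_two_cycles_feature_count_general n s ℓ hn hs hsn Feq Fadj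
end
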